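/- In a commutative idempotent involutive residuated lattice, for every x and every y with 0_x ⊑ y ⊑ 1_x (monoidal order), one has 0_y = 0_x (i.e., y ∧ ¬y = x ∧ ¬x). -/

import Mathlib

/-- A commutative idempotent involutive residuated lattice. -/
class CIdInRL (α : Type*) extends Lattice α, CommMonoid α, Zero α where
  arrow : α → α → α
  residuation : ∀ x y z : α, x * y ≤ z ↔ y ≤ arrow x z
  idem : ∀ x : α, x * x = x
  involutive : ∀ x : α, arrow (arrow x 0) 0 = x

namespace CIdInRL
variable {α : Type*} [CIdInRL α]
/-- linear negation ¬x := x → 0 -/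
def neg (x : α) : α := arrow x 0
/-- 0_x := x ∧ ¬x -/
def zx (x : α) : α := x ⊓ neg x
/-- 1_x := x ∨ ¬x -/
def ox (x : α) : α := x ⊔ neg x
/-- monoidal order x ⊑ y iff x·y = x -/
def mleq (x y : α) : Prop := x * y = x
end CIdInRL

/-!
Write `z = 0_x` and `o = 1_x`. By idempotency `0_a = a·¬a` for every `a`, and by De Morgan
`¬o = z`. If `y·o = y`, then `¬y = ¬(y·o) = y → z`, so `y·¬y ≤ z`. If `z·y = z`, then
`z·(y → y) = z·y·(y → y) ≤ z·y = z ≤ 0`, so `y → y ≤ ¬z`, and negating gives `z ≤ y·¬y`.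
-/

namespace CIdInRL

variable {α : Type*} [CIdInRL α] {a b : α}

instance : IsOrderedMonoid α where
  mul_le_mul_left a b hab c := by
    rw [mul_comm a, residuation]
    exact hab.trans ((residuation c b (b * c)).mp (mul_comm c b).le)

lemma mul_arrow_le (a b : α) : a * arrow a b ≤ b :=
  (residuation a _ b).mpr le_rfl

lemma le_neg_iff : a ≤ neg b ↔ b * a ≤ 0 :=
  (residuation b a 0).symm

lemma mul_neg_le_zero (a : α) : a * neg a ≤ 0 :=
  mul_arrow_le a 0

protected lemma neg_neg (a : α) : neg (neg a) = a :=
  involutive a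

lemma neg_le_neg (h : a ≤ b) : neg b ≤ neg a :=
  le_neg_iff.mpr ((mul_le_mul_left h _).trans (mul_neg_le_zero b))

protected lemma neg_mul (a b : α) : neg (a * b) = arrow a (neg b) := by
  apply le_antisymm
  · refine (residuation a _ _).mp (le_neg_iff.mpr ?_)
    rw [← mul_assoc, mul_comm b a]
    exact mul_neg_le_zero _
  · rw [le_neg_iff, mul_comm a, mul_assoc]
    exact (mul_le_mul_right (mul_arrow_le a _) b).trans (mul_neg_le_zero b)

lemma neg_arrow (a b : α) : neg (arrow a b) = a * neg b := by
  rw [← CIdInRL.neg_neg (a * neg b), CIdInRL.neg_mul, CIdInRL.neg_neg]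

protected lemma neg_sup (a b : α) : neg (a ⊔ b) = neg a ⊓ neg b := by
  apply le_antisymm
  · exact le_inf (neg_le_neg le_sup_left) (neg_le_neg le_sup_right)
  · rw [le_neg_iff, mul_comm, ← le_neg_iff, sup_le_iff]
    refine ⟨?_, ?_⟩ <;> rw [le_neg_iff, mul_comm, ← le_neg_iff]
    exacts [inf_le_left, inf_le_right]

lemma neg_ox (a : α) : neg (ox a) = zx a := by
  rw [ox, CIdInRL.neg_sup, CIdInRL.neg_neg, inf_comm, zx]

lemma zx_eq_mul_neg (a : α) : zx a = a * neg a := by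
  apply le_antisymm
  · calc zx a = zx a * zx a := (idem _).symm
      _ ≤ a * neg a := mul_le_mul' inf_le_left inf_le_right
  · refine le_inf ?_ (le_neg_iff.mpr ?_)
    · refine (le_neg_iff.mpr ?_).trans_eq (CIdInRL.neg_neg a)
      rw [mul_left_comm, idem]
      exact mul_neg_le_zero a
    · rw [← mul_assoc, idem]
      exact mul_neg_le_zero a

lemma zx_le_zero (a : α) : zx a ≤ 0 :=
  (zx_eq_mul_neg a).trans_le (mul_neg_le_zero a)

lemma mul_neg_le_neg_of_mul_eq (h : a * b = a) : a * neg a ≤ neg b := by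
  have hneg : neg a = arrow a (neg b) := by rw [← CIdInRL.neg_mul, h]
  exact hneg ▸ mul_arrow_le a _

lemma le_mul_neg_of_mul_eq (h : b * a = b) (hb : b ≤ 0) : b ≤ a * neg a := by
  have hself : arrow a a ≤ neg b := by
    rw [le_neg_iff]
    calc b * arrow a a = b * (a * arrow a a) := by rw [← mul_assoc, h]
      _ ≤ b * a := mul_le_mul_right (mul_arrow_le a a) b
      _ ≤ 0 := h.trans_le hb
  simpa only [CIdInRL.neg_neg, neg_arrow] using neg_le_neg hself

end CIdInRL

open CIdInRL in
theorem stmt5 {α : Type*} [CIdInRL α] (x y : α)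
    (hy : mleq (zx x) y ∧ mleq y (ox x)) :
    zx y = zx x := by
  obtain ⟨hzy, hyo⟩ := hy
  rw [zx_eq_mul_neg y]
  apply le_antisymm
  · simpa only [neg_ox] using mul_neg_le_neg_of_mul_eq hyo
  · exact le_mul_neg_of_mul_eq hzy (zx_le_zero x)
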